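/- Let q ∈ L¹[0,1] be real-valued. If the first eigenvalue λ₀ of the periodic problem -y''+qy=λy, y(1)=y(0), y'(1)=y'(0) equals ∫₀¹ q(x) dx, then q(x) = λ₀ almost everywhere on [0,1]. -/

import Mathlib

/-!
Taking `y = 1` in the variational principle gives `λ₀ ≤ ∫ q`, so the hypothesis `λ₀ = ∫ q` says
that the constant function minimises the Rayleigh quotient. Perturbing it to `1 + ε g` for a
periodic `g`, the quotient minus `λ₀` is, up to a positive factor,
`2ε ∫ (q - λ₀) g + O(ε²)`, so minimality at `ε = 0` forces `∫ (q - λ₀) g = 0` for every such `g`.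
Smooth bump functions supported in `(0, 1)` are periodic, hence `q = λ₀` almost everywhere by the
fundamental lemma of the calculus of variations.
-/

open MeasureTheory intervalIntegral Complex

/-- The (real-valued) Rayleigh quotient of `y` for the operator `-y'' + q y` on `[0,1]`. -/
noncomputable def rayleighQuotientR (q : ℝ → ℝ) (y : ℝ → ℂ) : ℝ :=
  (∫ x in (0:ℝ)..1,
      ((-(starRingEnd ℂ) (y x) * deriv (deriv y) x).re + q x * ‖y x‖^2)) /
  (∫ x in (0:ℝ)..1, ‖y x‖^2)

def PeriodicBC (y : ℝ → ℂ) : Prop := y 1 = y 0 ∧ deriv y 1 = deriv y 0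

def IsEigenfunction (q : ℝ → ℝ) (lam : ℝ) (y : ℝ → ℂ) : Prop :=
  ContDiff ℝ 2 y ∧ (∃ x ∈ Set.Icc (0:ℝ) 1, y x ≠ 0) ∧ PeriodicBC y ∧
  ∀ᵐ x, x ∈ Set.Icc (0:ℝ) 1 → -deriv (deriv y) x + (q x : ℂ) * y x = (lam : ℂ) * y x

def IsEigenvalue (q : ℝ → ℝ) (lam : ℝ) : Prop := ∃ y, IsEigenfunction q lam y

def IsFirstEigenvalue (q : ℝ → ℝ) (lam0 : ℝ) : Prop :=
  IsEigenvalue q lam0 ∧ ∀ lam, IsEigenvalue q lam → lam0 ≤ lam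

open Filter Topology Set
open scoped ContDiff

theorem deriv_ofReal_comp {u : ℝ → ℝ} (hu : Differentiable ℝ u) :
    deriv (fun x => (u x : ℂ)) = fun x => ((deriv u x : ℝ) : ℂ) :=
  funext fun x => (hu x).hasDerivAt.ofReal_comp.deriv

theorem integral_mul_deriv_deriv_eq_neg_integral_deriv_sq {u : ℝ → ℝ} {a b : ℝ}
    (hu : ContDiff ℝ 2 u) (hper : u b = u a) (hper' : deriv u b = deriv u a) :
    ∫ x in a..b, u x * deriv (deriv u) x = -∫ x in a..b, deriv u x ^ 2 := by
  obtain ⟨hu₁, -, hu'⟩ := contDiff_succ_iff_deriv.mp (show ContDiff ℝ (1 + 1) u from hu)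
  obtain ⟨hu₂, hu''⟩ := contDiff_one_iff_deriv.mp hu'
  rw [integral_mul_deriv_eq_deriv_mul (fun x _ => (hu₁ x).hasDerivAt)
    (fun x _ => (hu₂ x).hasDerivAt) (hu'.continuous.intervalIntegrable _ _)
    (hu''.intervalIntegrable _ _), hper, hper']
  simp only [sq, sub_self, zero_sub]

noncomputable def schrodingerForm (r u : ℝ → ℝ) : ℝ :=
  ∫ x in (0:ℝ)..1, deriv u x ^ 2 + r x * u x ^ 2

theorem rayleighQuotientR_ofReal_sub {q u : ℝ → ℝ} (hq : IntervalIntegrable q volume 0 1)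
    (hu : ContDiff ℝ 2 u) (hper : u 1 = u 0) (hper' : deriv u 1 = deriv u 0) (lam : ℝ)
    (hnorm : ∫ x in (0:ℝ)..1, u x ^ 2 ≠ 0) :
    rayleighQuotientR q (fun x => (u x : ℂ)) - lam =
      schrodingerForm (fun x => q x - lam) u / ∫ x in (0:ℝ)..1, u x ^ 2 := by
  obtain ⟨hu₁, -, hu'⟩ := contDiff_succ_iff_deriv.mp (show ContDiff ℝ (1 + 1) u from hu)
  have hu'' : Continuous (deriv (deriv u)) := (contDiff_one_iff_deriv.mp hu').2
  have hsq : IntervalIntegrable (fun x => u x ^ 2) volume 0 1 :=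
    (hu.continuous.pow 2).intervalIntegrable _ _
  have hqsq : IntervalIntegrable (fun x => q x * u x ^ 2) volume 0 1 :=
    hq.mul_continuousOn (hu.continuous.pow 2).continuousOn
  have hnum : ∀ x, ((-(starRingEnd ℂ) (u x : ℂ) * deriv (deriv fun x => (u x : ℂ)) x).re
      + q x * ‖(u x : ℂ)‖ ^ 2) = -(u x * deriv (deriv u) x) + q x * u x ^ 2 := by
    intro x
    rw [deriv_ofReal_comp hu₁, deriv_ofReal_comp (hu'.differentiable one_ne_zero)]
    simp only [Complex.conj_ofReal, ← Complex.ofReal_neg, ← Complex.ofReal_mul,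
      Complex.ofReal_re, Complex.norm_real, Real.norm_eq_abs, sq_abs, neg_mul]
  have hden : ∀ x, ‖(u x : ℂ)‖ ^ 2 = u x ^ 2 := fun x => by
    rw [Complex.norm_real, Real.norm_eq_abs, sq_abs]
  have hderiv_sq : IntervalIntegrable (fun x => deriv u x ^ 2) volume 0 1 :=
    (hu'.continuous.pow 2).intervalIntegrable _ _
  have hsplit : ∫ x in (0:ℝ)..1, deriv u x ^ 2 + (q x - lam) * u x ^ 2
      = (∫ x in (0:ℝ)..1, deriv u x ^ 2) + ((∫ x in (0:ℝ)..1, q x * u x ^ 2)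
          - lam * ∫ x in (0:ℝ)..1, u x ^ 2) := by
    rw [← intervalIntegral.integral_const_mul, ← integral_sub hqsq (hsq.const_mul lam),
      ← integral_add hderiv_sq (hqsq.sub (hsq.const_mul lam))]
    exact integral_congr fun x _ => by ring
  rw [rayleighQuotientR, schrodingerForm, integral_congr fun x _ => hnum x,
    integral_congr fun x _ => hden x, div_sub' hnorm,
    integral_add (f := fun x => -(u x * deriv (deriv u) x))
      ((hu.continuous.mul hu'').intervalIntegrable _ _).neg hqsq,
    intervalIntegral.integral_neg, integral_mul_deriv_deriv_eq_neg_integral_deriv_sq hu hper hper',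
    neg_neg, hsplit]
  ring

theorem schrodingerForm_one_add_mul {r g : ℝ → ℝ} (hr : IntervalIntegrable r volume 0 1)
    (hg : ContDiff ℝ 1 g) (ε : ℝ) :
    schrodingerForm r (fun x => 1 + ε * g x) =
      (∫ x in (0:ℝ)..1, r x) + ε * (2 * ∫ x in (0:ℝ)..1, r x * g x)
        + ε ^ 2 * schrodingerForm r g := by
  obtain ⟨hg₁, hg'⟩ := contDiff_one_iff_deriv.mp hg
  have hderiv : deriv (fun x => 1 + ε * g x) = fun x => ε * deriv g x :=
    funext fun x => ((hg₁ x).hasDerivAt.const_mul ε).const_add 1 |>.deriv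
  have hrg : IntervalIntegrable (fun x => r x * g x) volume 0 1 :=
    hr.mul_continuousOn hg₁.continuous.continuousOn
  have hform : IntervalIntegrable (fun x => deriv g x ^ 2 + r x * g x ^ 2) volume 0 1 :=
    ((hg'.pow 2).intervalIntegrable _ _).add
      (hr.mul_continuousOn (hg₁.continuous.pow 2).continuousOn)
  calc schrodingerForm r (fun x => 1 + ε * g x)
      = ∫ x in (0:ℝ)..1, (r x + ε * (2 * (r x * g x)))
          + ε ^ 2 * (deriv g x ^ 2 + r x * g x ^ 2) := by
        rw [schrodingerForm, hderiv]
        exact integral_congr fun x _ => by ring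
    _ = _ := by
      rw [integral_add (hr.add ((hrg.const_mul 2).const_mul ε)) (hform.const_mul _),
        integral_add hr ((hrg.const_mul 2).const_mul ε), intervalIntegral.integral_const_mul,
        intervalIntegral.integral_const_mul, intervalIntegral.integral_const_mul, schrodingerForm]

theorem eventually_forall_pos_one_add_mul {g : ℝ → ℝ} (hg : Continuous g) {K : Set ℝ}
    (hK : IsCompact K) : ∀ᶠ ε in 𝓝 (0:ℝ), ∀ x ∈ K, 0 < 1 + ε * g x := by
  refine hK.eventually_forall_of_forall_eventually fun x _ => ?_
  have hcont : Continuous fun p : ℝ × ℝ => 1 + p.1 * g p.2 := by fun_prop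
  exact hcont.continuousAt.eventually (lt_mem_nhds (by simp))

theorem eq_zero_of_eventually_nonneg_mul_add_sq {a b : ℝ}
    (h : ∀ᶠ ε in 𝓝 (0:ℝ), 0 ≤ ε * a + ε ^ 2 * b) : a = 0 := by
  have hmin : IsLocalMin (fun ε : ℝ => ε * a + ε ^ 2 * b) 0 :=
    h.mono fun ε hε => by simpa using hε
  have hderiv : HasDerivAt (fun ε : ℝ => ε * a + ε ^ 2 * b) a 0 := by
    simpa using ((hasDerivAt_id' (0:ℝ)).mul_const a).fun_add
      ((hasDerivAt_pow 2 (0:ℝ)).mul_const b)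
  exact hmin.hasDerivAt_eq_zero hderiv

theorem integral_mul_sub_eq_zero_of_forall_le_rayleighQuotientR {q g : ℝ → ℝ} {lam0 : ℝ}
    (hq : IntervalIntegrable q volume 0 1)
    (hvar : ∀ y : ℝ → ℂ, ContDiff ℝ 2 y → (∃ x ∈ Set.Icc (0:ℝ) 1, y x ≠ 0) →
      PeriodicBC y → lam0 ≤ rayleighQuotientR q y)
    (heq : lam0 = ∫ x in (0:ℝ)..1, q x)
    (hg : ContDiff ℝ 2 g) (hper : g 1 = g 0) (hper' : deriv g 1 = deriv g 0) :
    ∫ x in (0:ℝ)..1, g x * (q x - lam0) = 0 := by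
  have hr : IntervalIntegrable (fun x => q x - lam0) volume 0 1 :=
    hq.sub intervalIntegrable_const
  have hr_int : ∫ x in (0:ℝ)..1, (q x - lam0) = 0 := by
    rw [integral_sub hq intervalIntegrable_const, ← heq]
    simp
  have hexpand : ∀ᶠ ε in 𝓝 (0:ℝ), 0 ≤ ε * (2 * ∫ x in (0:ℝ)..1, (q x - lam0) * g x)
      + ε ^ 2 * schrodingerForm (fun x => q x - lam0) g := by
    filter_upwards [eventually_forall_pos_one_add_mul hg.continuous isCompact_Icc] with ε hpos
    set u : ℝ → ℝ := fun x => 1 + ε * g x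
    have hu : ContDiff ℝ 2 u := contDiff_const.add (contDiff_const.mul hg)
    have hderiv : deriv u = fun x => ε * deriv g x :=
      funext fun x =>
        ((hg.differentiable two_ne_zero x).hasDerivAt.const_mul ε).const_add 1 |>.deriv
    have hper_u : u 1 = u 0 := by simp only [u, hper]
    have hper_u' : deriv u 1 = deriv u 0 := by simp only [hderiv, hper']
    have hbc : PeriodicBC (fun x => (u x : ℂ)) := by
      refine ⟨congrArg _ hper_u, ?_⟩
      rw [deriv_ofReal_comp (hu.differentiable two_ne_zero)]
      exact congrArg _ hper_u'
    have hnorm : 0 < ∫ x in (0:ℝ)..1, u x ^ 2 :=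
      intervalIntegral_pos_of_pos_on ((hu.continuous.pow 2).intervalIntegrable _ _)
        (fun x hx => pow_pos (hpos x (Ioo_subset_Icc_self hx)) 2) zero_lt_one
    have hle := hvar (fun x => (u x : ℂ)) (Complex.ofRealCLM.contDiff.comp hu)
      ⟨0, left_mem_Icc.mpr zero_le_one, Complex.ofReal_ne_zero.mpr (hpos 0 (by simp)).ne'⟩ hbc
    rw [← sub_nonneg, rayleighQuotientR_ofReal_sub hq hu hper_u hper_u' lam0 hnorm.ne',
      le_div_iff₀ hnorm, zero_mul] at hle
    rwa [schrodingerForm_one_add_mul hr (hg.of_le one_le_two), hr_int, zero_add] at hle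
  have hfirst := eq_zero_of_eventually_nonneg_mul_add_sq hexpand
  rw [← intervalIntegral.integral_congr fun x _ => mul_comm (q x - lam0) (g x)]
  linarith

theorem ae_eq_zero_on_Icc_of_integral_mul_eq_zero {f : ℝ → ℝ} {a b : ℝ}
    (hf : IntegrableOn f (Icc a b))
    (h : ∀ g : ℝ → ℝ, ContDiff ℝ ∞ g → tsupport g ⊆ Ioo a b → ∫ x in a..b, g x * f x = 0) :
    ∀ᵐ x, x ∈ Icc a b → f x = 0 := by
  have hIoo : ∀ᵐ x, x ∈ Ioo a b → f x = 0 := by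
    refine isOpen_Ioo.ae_eq_zero_of_integral_contDiff_smul_eq_zero
      (hf.mono_set Ioo_subset_Icc_self).locallyIntegrableOn fun g hg _ hsupp => ?_
    have hsupp' : Function.support (fun x => g x * f x) ⊆ Ioc a b :=
      (Function.support_mul_subset_left _ _).trans
        ((subset_tsupport g).trans (hsupp.trans Ioo_subset_Ioc_self))
    simpa only [smul_eq_mul, integral_eq_integral_of_support_subset hsupp'] using h g hg hsupp
  filter_upwards [hIoo, (Ioo_ae_eq_Icc (μ := volume) (a := a) (b := b)).mem_iff]
    with x hx hmem hIcc using hx (hmem.mpr hIcc)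

theorem periodic_of_tsupport_subset_Ioo {g : ℝ → ℝ} {a b : ℝ} (hsupp : tsupport g ⊆ Ioo a b) :
    g b = g a ∧ deriv g b = deriv g a := by
  have hend : ∀ x ∉ tsupport g, g x = 0 ∧ deriv g x = 0 := fun x hx =>
    ⟨image_eq_zero_of_notMem_tsupport hx,
      image_eq_zero_of_notMem_tsupport fun h => hx (tsupport_deriv_subset h)⟩
  obtain ⟨ha, ha'⟩ := hend a fun h => (hsupp h).1.false
  obtain ⟨hb, hb'⟩ := hend b fun h => (hsupp h).2.false
  exact ⟨hb.trans ha.symm, hb'.trans ha'.symm⟩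

theorem ambarzumyan_periodic_general (q : ℝ → ℝ)
    (hq : IntegrableOn q (Set.Icc (0:ℝ) 1))
    (lam0 : ℝ)
    (hvar : ∀ y : ℝ → ℂ, ContDiff ℝ 2 y → (∃ x ∈ Set.Icc (0:ℝ) 1, y x ≠ 0) →
      PeriodicBC y → lam0 ≤ rayleighQuotientR q y)
    (heq : lam0 = ∫ x in (0:ℝ)..1, q x) :
    ∀ᵐ x, x ∈ Set.Icc (0:ℝ) 1 → q x = lam0 := by
  have hqI : IntervalIntegrable q volume 0 1 :=
    (intervalIntegrable_iff_integrableOn_Icc_of_le zero_le_one).mpr hq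
  have hae := ae_eq_zero_on_Icc_of_integral_mul_eq_zero (hq.sub (integrableOn_const (by simp)))
    fun g hg hsupp =>
      have hper := periodic_of_tsupport_subset_Ioo hsupp
      integral_mul_sub_eq_zero_of_forall_le_rayleighQuotientR hqI hvar heq
        (hg.of_le (WithTop.coe_le_coe.mpr le_top)) hper.1 hper.2
  filter_upwards [hae] with x hx hmem using sub_eq_zero.mp (hx hmem)

/-- Yurko, Theorem 2(a): if the first eigenvalue `λ₀` of the periodic
problem equals `∫₀¹ q`, then `q = λ₀` a.e. -/
theorem ambarzumyan_periodic (q : ℝ → ℝ)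
    (hq : IntegrableOn q (Set.Icc (0:ℝ) 1))
    (lam0 : ℝ) (hfirst : IsFirstEigenvalue q lam0)
    (hvar : ∀ y : ℝ → ℂ, ContDiff ℝ 2 y → (∃ x ∈ Set.Icc (0:ℝ) 1, y x ≠ 0) →
      PeriodicBC y → lam0 ≤ rayleighQuotientR q y)
    (heq : lam0 = ∫ x in (0:ℝ)..1, q x) :
    ∀ᵐ x, x ∈ Set.Icc (0:ℝ) 1 → q x = lam0 :=
  ambarzumyan_periodic_general q hq lam0 hvar heq
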